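/- Suppose Y is a finite dimensional normed vectorspace over ℝ, D is a closed subset of Y, and 0 < s < ∞. Then there exists a countable family G of functions from Y to ℝ with the following properties: (1) for every g ∈ G, the support of g is contained in the open ball B(d,s) for some d ∈ D; (2) for every y ∈ Y, card ( { g ∈ G : B̄(y, s/4) ∩ spt g ≠ ∅ } ) ≤ 129^{dim Y}; (3) D is contained in the interior of { y : Σ_{g ∈ G} g(y) = 1 }, and Σ_{g ∈ G} g(y) ≤ 1 for every y ∈ Y; (4) for every g ∈ G, 0 ≤ g(y) ≤ 1 for all y ∈ Y and g is Lipschitzian with Lipschitz constant at most 40 · 130^{dim Y} · s^{-1}. -/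

import Mathlib

/-!
Take a maximal `s/4`-separated subset `T` of `D`, so that every point of `D` lies within `s/4`
of `T`. Around each `t ∈ T` put the trapezoid bump equal to `1` on `B̄(t, s/4)` and vanishing off
`B(t, s/2)`, and divide every bump by `max 1 (∑ bumps)`. Comparing volumes, a ball of radius
`3s/4` contains at most `7 ^ dim Y` points of an `s/4`-separated set; this bounds the overlap and
the number of bumps that can change between nearby points, hence the Lipschitz constant of the
normalizing sum. On the `s/4`-neighbourhood of `T` the bumps sum to at least `1`, so the
normalized family sums to exactly `1` there.
-/

open Metric Set Module MeasureTheory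
open scoped ENNReal

section Separated

variable {X : Type*} [PseudoMetricSpace X]

theorem Set.Pairwise.pairwiseDisjoint_ball_of_le_dist {r : ℝ} {P : Set X}
    (hP : P.Pairwise (r ≤ dist · ·)) : P.PairwiseDisjoint (ball · (r / 2)) :=
  fun _ ha _ hb hab => ball_disjoint_ball (by linarith [hP ha hb hab])

theorem exists_subset_pairwise_le_dist_forall_exists_dist_lt {r : ℝ} (hr : 0 < r) (D : Set X) :
    ∃ T ⊆ D, T.Pairwise (r ≤ dist · ·) ∧ ∀ d ∈ D, ∃ t ∈ T, dist d t < r := by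
  obtain ⟨T, hT⟩ := zorn_subset {T : Set X | T ⊆ D ∧ T.Pairwise (r ≤ dist · ·)}
    fun c hc hchain => ⟨⋃₀ c, ⟨sUnion_subset fun t ht => (hc ht).1,
      (pairwise_sUnion hchain.directedOn).mpr fun t ht => (hc ht).2⟩,
      fun _ => subset_sUnion_of_mem⟩
  obtain ⟨hTD, hTsep⟩ := hT.prop
  refine ⟨T, hTD, hTsep, fun d hd => ?_⟩
  by_contra! hfar
  have hdT : d ∉ T := fun hdT => by linarith [hfar d hdT, dist_self d]
  refine hdT (hT.2 ⟨insert_subset hd hTD, hTsep.insert fun t ht _ => ?_⟩ (subset_insert d T)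
    (mem_insert d T))
  exact ⟨hfar t ht, dist_comm d t ▸ hfar t ht⟩

end Separated

section Packing

variable {Y : Type*} [NormedAddCommGroup Y] [NormedSpace ℝ Y] [FiniteDimensional ℝ Y]

theorem Finset.card_le_pow_of_pairwise_le_dist {r R : ℝ} {k : ℕ} (hr : 0 < r)
    (hk : R + r / 2 ≤ k * (r / 2)) (y : Y) (P : Finset Y) (hPy : ∀ t ∈ P, dist t y ≤ R)
    (hP : (P : Set Y).Pairwise (r ≤ dist · ·)) : P.card ≤ k ^ finrank ℝ Y := by
  borelize Y
  let μ : Measure Y := Measure.addHaar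
  set c := ENNReal.ofReal ((r / 2) ^ finrank ℝ Y) * μ (ball 0 1)
  have hc : c ≠ 0 := mul_ne_zero (by simp [hr]) (measure_ball_pos μ 0 one_pos).ne'
  have hc' : c ≠ ⊤ := ENNReal.mul_ne_top ENNReal.ofReal_ne_top measure_ball_lt_top.ne
  have hsub : ⋃ t ∈ P, ball t (r / 2) ⊆ closedBall y (k * (r / 2)) := by
    refine iUnion₂_subset fun t ht x hx => ?_
    rw [mem_ball] at hx
    rw [mem_closedBall]
    linarith [dist_triangle x t y, hPy t ht]
  have hk0 : (0 : ℝ) ≤ k * (r / 2) := by positivity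
  have : (P.card : ℝ≥0∞) * c ≤ (k : ℝ≥0∞) ^ finrank ℝ Y * c :=
    calc (P.card : ℝ≥0∞) * c = ∑ t ∈ P, μ (ball t (r / 2)) := by
          simp [c, Measure.addHaar_ball_of_pos μ _ (half_pos hr)]
      _ = μ (⋃ t ∈ P, ball t (r / 2)) :=
          (measure_biUnion_finset hP.pairwiseDisjoint_ball_of_le_dist
            fun _ _ => measurableSet_ball).symm
      _ ≤ μ (closedBall y (k * (r / 2))) := measure_mono hsub
      _ = (k : ℝ≥0∞) ^ finrank ℝ Y * c := by
          rw [Measure.addHaar_closedBall μ y hk0, mul_pow, ENNReal.ofReal_mul (by positivity),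
            ← mul_assoc, ENNReal.ofReal_pow (Nat.cast_nonneg k), ENNReal.ofReal_natCast]
  exact_mod_cast (ENNReal.mul_le_mul_iff_left hc hc').mp this

theorem Set.encard_le_pow_of_pairwise_le_dist {r R : ℝ} {k : ℕ} (hr : 0 < r)
    (hk : R + r / 2 ≤ k * (r / 2)) (y : Y) {P : Set Y} (hPy : ∀ t ∈ P, dist t y ≤ R)
    (hP : P.Pairwise (r ≤ dist · ·)) : P.encard ≤ k ^ finrank ℝ Y := by
  by_contra! hlt
  obtain ⟨Q, hQP, hQ⟩ := exists_subset_encard_eq (Order.add_one_le_of_lt hlt)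
  obtain ⟨F, rfl⟩ :=
    (finite_of_encard_eq_coe (k := k ^ finrank ℝ Y + 1) (by simpa using hQ)).exists_finset_coe
  have := F.card_le_pow_of_pairwise_le_dist hr hk y (fun t ht => hPy t (hQP ht)) (hP.mono hQP)
  rw [encard_coe_eq_coe_finsetCard] at hQ
  norm_cast at hQ
  omega

theorem Set.Finite.of_pairwise_le_dist {r : ℝ} (hr : 0 < r) (y : Y) (R : ℝ) {P : Set Y}
    (hPy : ∀ t ∈ P, dist t y ≤ R) (hP : P.Pairwise (r ≤ dist · ·)) : P.Finite := by
  obtain ⟨k, hk⟩ := exists_nat_ge ((R + r / 2) / (r / 2))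
  have hk' : R + r / 2 ≤ k * (r / 2) := by rwa [← div_le_iff₀ (half_pos hr)]
  exact finite_of_encard_le_coe (k := k ^ finrank ℝ Y)
    (by exact_mod_cast encard_le_pow_of_pairwise_le_dist hr hk' y hPy hP)

theorem Set.Pairwise.countable_of_le_dist {r : ℝ} (hr : 0 < r) {P : Set Y}
    (hP : P.Pairwise (r ≤ dist · ·)) : P.Countable :=
  hP.pairwiseDisjoint_ball_of_le_dist.countable_of_isOpen (fun _ _ => isOpen_ball)
    fun _ _ => nonempty_ball.mpr (half_pos hr)

end Packing

section TrapezoidBump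

variable {X : Type*} [PseudoMetricSpace X] {r : ℝ}

noncomputable def trapezoidBump (r : ℝ) (t y : X) : ℝ := max 0 (min 1 (2 - dist y t / r))

theorem trapezoidBump_nonneg (t y : X) : 0 ≤ trapezoidBump r t y := le_max_left _ _

theorem trapezoidBump_le_one (t y : X) : trapezoidBump r t y ≤ 1 :=
  max_le zero_le_one (min_le_left _ _)

theorem trapezoidBump_eq_one_iff (hr : 0 < r) {t y : X} :
    trapezoidBump r t y = 1 ↔ dist y t ≤ r := by
  rw [← div_le_one hr, trapezoidBump]
  constructor
  · intro h
    by_contra! hlt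
    have : max 0 (min 1 (2 - dist y t / r)) < 1 :=
      max_lt one_pos ((min_le_right _ _).trans_lt (by linarith))
    exact this.ne h
  · intro h
    rw [min_eq_left (by linarith), max_eq_right zero_le_one]

theorem trapezoidBump_eq_zero (hr : 0 < r) {t y : X} (h : 2 * r ≤ dist y t) :
    trapezoidBump r t y = 0 := by
  have : 2 - dist y t / r ≤ 0 := by rw [sub_nonpos, le_div_iff₀ hr]; linarith
  exact max_eq_left ((min_le_right _ _).trans this)

theorem dist_lt_of_trapezoidBump_ne_zero (hr : 0 < r) {t y : X}
    (h : trapezoidBump r t y ≠ 0) : dist y t < 2 * r :=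
  not_le.mp (mt (trapezoidBump_eq_zero hr) h)

theorem tsupport_trapezoidBump_subset (hr : 0 < r) (t : X) :
    tsupport (trapezoidBump r t) ⊆ closedBall t (2 * r) :=
  closure_minimal (fun _ hy => (dist_lt_of_trapezoidBump_ne_zero hr hy).le) isClosed_closedBall

theorem lipschitzWith_trapezoidBump (hr : 0 < r) (t : X) :
    LipschitzWith (Real.toNNReal r⁻¹) (trapezoidBump r t) := by
  have hlin : LipschitzWith (Real.toNNReal r⁻¹) fun y => 2 - dist y t / r := by
    refine LipschitzWith.of_dist_le_mul fun y z => ?_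
    rw [Real.coe_toNNReal _ (inv_nonneg.mpr hr.le), Real.dist_eq, sub_sub_sub_cancel_left,
      ← sub_div, abs_div, abs_of_pos hr, abs_sub_comm, inv_mul_eq_div]
    exact div_le_div_of_nonneg_right (abs_dist_sub_le y z t) hr.le
  have := ((LipschitzWith.id.const_min 1).const_max 0).comp hlin
  rwa [one_mul] at this

theorem abs_trapezoidBump_sub_le (hr : 0 < r) (t y z : X) :
    |trapezoidBump r t y - trapezoidBump r t z| ≤ r⁻¹ * dist y z := by
  simpa [Real.coe_toNNReal _ (inv_nonneg.mpr hr.le), Real.dist_eq] using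
    (lipschitzWith_trapezoidBump hr t).dist_le_mul y z

end TrapezoidBump

section NormalizedBump

variable {X : Type*} [PseudoMetricSpace X] {r : ℝ} {T : Set X}

noncomputable def bumpSum (r : ℝ) (T : Set X) (y : X) : ℝ :=
  ∑' t : T, trapezoidBump r (t : X) y

/-- Dividing by `max 1 (bumpSum r T y)` instead of `bumpSum r T y` avoids dividing by zero far
from `T` and keeps the quotient Lipschitz. -/
noncomputable def normalizedBump (r : ℝ) (T : Set X) (t y : X) : ℝ :=
  trapezoidBump r t y / max 1 (bumpSum r T y)

theorem bumpSum_eq_sum {y : X} (F : Finset T)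
    (hF : ∀ t : T, trapezoidBump r (t : X) y ≠ 0 → t ∈ F) :
    bumpSum r T y = ∑ t ∈ F, trapezoidBump r (t : X) y :=
  tsum_eq_sum fun t ht => not_imp_comm.mp (hF t) ht

theorem normalizedBump_nonneg (t y : X) : 0 ≤ normalizedBump r T t y :=
  div_nonneg (trapezoidBump_nonneg t y) (zero_le_one.trans (le_max_left _ _))

theorem normalizedBump_le_one (t y : X) : normalizedBump r T t y ≤ 1 :=
  div_le_one_of_le₀ ((trapezoidBump_le_one t y).trans (le_max_left _ _))
    (zero_le_one.trans (le_max_left _ _))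

theorem tsupport_normalizedBump_subset (hr : 0 < r) (t : X) :
    tsupport (normalizedBump r T t) ⊆ closedBall t (2 * r) :=
  (closure_mono ((Function.support_div _ _).trans_subset inter_subset_left)).trans
    (tsupport_trapezoidBump_subset hr t)

end NormalizedBump

theorem abs_div_sub_div_le_of_one_le {a b M N : ℝ} (hb : 0 ≤ b) (hb1 : b ≤ 1) (hM : 1 ≤ M)
    (hN : 1 ≤ N) : |a / M - b / N| ≤ |a - b| + |M - N| := by
  have hM0 : 0 < M := zero_lt_one.trans_le hM
  have hN0 : 0 < N := zero_lt_one.trans_le hN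
  have hfst : |(a - b) / M| ≤ |a - b| := by
    rw [abs_div, abs_of_pos hM0]
    exact div_le_self (abs_nonneg _) hM
  have hsnd : |b * (N - M) / (M * N)| ≤ |M - N| := by
    rw [abs_div, abs_mul, abs_of_nonneg hb, abs_of_pos (mul_pos hM0 hN0), abs_sub_comm,
      div_le_iff₀ (mul_pos hM0 hN0)]
    nlinarith [abs_nonneg (M - N), mul_le_mul hM hN zero_le_one hM0.le]
  calc |a / M - b / N| = |(a - b) / M + b * (N - M) / (M * N)| := by
        congr 1; field_simp; ring
    _ ≤ |a - b| + |M - N| := (abs_add_le _ _).trans (add_le_add hfst hsnd)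

section Normed

variable {Y : Type*} [NormedAddCommGroup Y] [NormedSpace ℝ Y] {r : ℝ} {T : Set Y}

theorem trapezoidBump_injective (hr : 0 < r) :
    Function.Injective (trapezoidBump r : Y → Y → ℝ) := by
  intro t t' htt'
  by_contra hne
  have hpos : 0 < ‖t - t'‖ := norm_pos_iff.mpr (sub_ne_zero.mpr hne)
  -- a point at distance `r` from `t` but at distance `r + ‖t - t'‖` from `t'`
  set y := t + (r / ‖t - t'‖) • (t - t')
  have hyt : dist y t ≤ r := by
    rw [dist_eq_norm, add_sub_cancel_left, norm_smul, Real.norm_of_nonneg (by positivity),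
      div_mul_cancel₀ _ hpos.ne']
  have hyt' : dist y t' = r + ‖t - t'‖ := by
    rw [dist_eq_norm, show y - t' = (r / ‖t - t'‖ + 1) • (t - t') by module, norm_smul,
      Real.norm_of_nonneg (by positivity), add_mul, div_mul_cancel₀ _ hpos.ne', one_mul]
  have := (trapezoidBump_eq_one_iff hr).mp
    (congrFun htt' y ▸ (trapezoidBump_eq_one_iff hr).mpr hyt)
  linarith

theorem normalizedBump_injective (hr : 0 < r) :
    Function.Injective (normalizedBump r T : Y → Y → ℝ) := by
  refine fun t t' h => trapezoidBump_injective hr (funext fun y => ?_)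
  exact (div_left_inj' (zero_lt_one.trans_le (le_max_left _ _)).ne').mp (congrFun h y)

theorem tsum_normalizedBump_image (hr : 0 < r) (y : Y) :
    ∑' g : normalizedBump r T '' T, (g : Y → ℝ) y =
      bumpSum r T y / max 1 (bumpSum r T y) := by
  rw [← (Equiv.Set.imageOfInjOn _ T (normalizedBump_injective hr).injOn).tsum_eq]
  exact tsum_div_const

variable [FiniteDimensional ℝ Y]

theorem finite_setOf_dist_le (hr : 0 < r) (hT : T.Pairwise (r ≤ dist · ·)) (y : Y) (R : ℝ) :
    {t : T | dist (t : Y) y ≤ R}.Finite := by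
  refine Finite.preimage (f := ((↑) : T → Y)) Subtype.val_injective.injOn
    (Finite.of_pairwise_le_dist hr y R (P := {t ∈ T | dist t y ≤ R}) (fun _ ht => ht.2)
      (hT.mono (sep_subset _ _))) |>.subset fun t ht => ⟨t.2, ht⟩

theorem summable_trapezoidBump (hr : 0 < r) (hT : T.Pairwise (r ≤ dist · ·)) (y : Y) :
    Summable fun t : T => trapezoidBump r (t : Y) y :=
  summable_of_hasFiniteSupport <| (finite_setOf_dist_le hr hT y (2 * r)).subset fun t ht => by
    simpa [dist_comm] using (dist_lt_of_trapezoidBump_ne_zero hr ht).le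

theorem one_le_bumpSum (hr : 0 < r) (hT : T.Pairwise (r ≤ dist · ·)) {t y : Y} (ht : t ∈ T)
    (hy : dist y t ≤ r) : 1 ≤ bumpSum r T y :=
  ((trapezoidBump_eq_one_iff hr).mpr hy).symm.le.trans <|
    (summable_trapezoidBump hr hT y).le_tsum ⟨t, ht⟩ fun _ _ => trapezoidBump_nonneg _ _

theorem abs_bumpSum_sub_le (hr : 0 < r) (hT : T.Pairwise (r ≤ dist · ·)) {y z : Y}
    (hyz : dist y z ≤ r) :
    |bumpSum r T y - bumpSum r T z| ≤ 7 ^ finrank ℝ Y * (r⁻¹ * dist y z) := by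
  -- only centres within `3 r` of `y` contribute, and by packing there are at most `7 ^ n` of them
  set F := (finite_setOf_dist_le hr hT y (3 * r)).toFinset
  have hyF : ∀ t : T, trapezoidBump r (t : Y) y ≠ 0 → t ∈ F := fun t ht => by
    simpa [F, dist_comm] using (dist_lt_of_trapezoidBump_ne_zero hr ht).le.trans (by linarith)
  have hzF : ∀ t : T, trapezoidBump r (t : Y) z ≠ 0 → t ∈ F := fun t ht => by
    have := dist_lt_of_trapezoidBump_ne_zero hr ht
    simp only [F, Finite.mem_toFinset, mem_ofPred_eq]
    linarith [dist_triangle (t : Y) z y, dist_comm (t : Y) z, dist_comm y z]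
  have hcard : (F.card : ℝ) ≤ 7 ^ finrank ℝ Y := by
    have := (F.map (Function.Embedding.subtype _)).card_le_pow_of_pairwise_le_dist
      (R := 3 * r) (k := 7) hr (by linarith) y (by simp +contextual [F]) (hT.mono (by simp))
    exact_mod_cast F.card_map _ ▸ this
  rw [bumpSum_eq_sum F hyF, bumpSum_eq_sum F hzF, ← Finset.sum_sub_distrib]
  calc |∑ t ∈ F, (trapezoidBump r (t : Y) y - trapezoidBump r (t : Y) z)|
      ≤ ∑ t ∈ F, |trapezoidBump r (t : Y) y - trapezoidBump r (t : Y) z| :=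
        F.abs_sum_le_sum_abs _
    _ ≤ F.card * (r⁻¹ * dist y z) := by
      rw [← nsmul_eq_mul]
      exact F.sum_le_card_nsmul _ _ fun t _ => abs_trapezoidBump_sub_le hr _ y z
    _ ≤ 7 ^ finrank ℝ Y * (r⁻¹ * dist y z) := by gcongr

theorem lipschitzWith_normalizedBump (hr : 0 < r) (hT : T.Pairwise (r ≤ dist · ·)) (t : Y) :
    LipschitzWith (Real.toNNReal ((1 + 7 ^ finrank ℝ Y) / r)) (normalizedBump r T t) := by
  refine LipschitzWith.of_dist_le_mul fun y z => ?_
  rw [Real.coe_toNNReal _ (by positivity), Real.dist_eq]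
  rcases le_or_gt (dist y z) r with hyz | hyz
  · calc |normalizedBump r T t y - normalizedBump r T t z|
        ≤ |trapezoidBump r t y - trapezoidBump r t z|
          + |max 1 (bumpSum r T y) - max 1 (bumpSum r T z)| :=
          abs_div_sub_div_le_of_one_le (trapezoidBump_nonneg t z) (trapezoidBump_le_one t z)
            (le_max_left _ _) (le_max_left _ _)
      _ ≤ r⁻¹ * dist y z + 7 ^ finrank ℝ Y * (r⁻¹ * dist y z) := by
          refine add_le_add (abs_trapezoidBump_sub_le hr t y z) ?_
          rw [max_comm 1, max_comm 1]
          exact (abs_max_sub_max_le_abs _ _ 1).trans (abs_bumpSum_sub_le hr hT hyz)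
      _ = (1 + 7 ^ finrank ℝ Y) / r * dist y z := by ring
  · have h1 : 1 ≤ dist y z / r := (one_le_div hr).mpr hyz.le
    calc |normalizedBump r T t y - normalizedBump r T t z| ≤ 1 :=
          abs_sub_le_of_nonneg_of_le (normalizedBump_nonneg t y) (normalizedBump_le_one t y)
            (normalizedBump_nonneg t z) (normalizedBump_le_one t z)
      _ ≤ (1 + 7 ^ finrank ℝ Y) * (dist y z / r) := by
          nlinarith [pow_nonneg (by norm_num : (0 : ℝ) ≤ 7) (finrank ℝ Y)]
      _ = (1 + 7 ^ finrank ℝ Y) / r * dist y z := by ring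

theorem encard_setOf_inter_tsupport_nonempty_le (hr : 0 < r) (hT : T.Pairwise (r ≤ dist · ·))
    (y : Y) : {g ∈ normalizedBump r T '' T | (closedBall y r ∩ tsupport g).Nonempty}.encard
      ≤ 7 ^ finrank ℝ Y := by
  calc _ ≤ (normalizedBump r T '' {t ∈ T | dist t y ≤ 3 * r}).encard := encard_le_encard ?_
    _ ≤ {t ∈ T | dist t y ≤ 3 * r}.encard := encard_image_le _ _
    _ ≤ 7 ^ finrank ℝ Y := encard_le_pow_of_pairwise_le_dist hr (by linarith) y
          (fun _ ht => ht.2) (hT.mono (sep_subset _ _))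
  rintro _ ⟨⟨t, ht, rfl⟩, x, hxy, hxt⟩
  refine ⟨t, ⟨ht, ?_⟩, rfl⟩
  linarith [dist_triangle t x y, mem_closedBall.mp hxy, dist_comm x t,
    mem_closedBall.mp (tsupport_normalizedBump_subset hr t hxt)]

theorem biUnion_ball_subset_interior_setOf_tsum_eq_one (hr : 0 < r)
    (hT : T.Pairwise (r ≤ dist · ·)) :
    ⋃ t ∈ T, ball t r ⊆
      interior {y | ∑' g : normalizedBump r T '' T, (g : Y → ℝ) y = 1} := by
  refine interior_maximal (fun y hy => ?_) (isOpen_biUnion fun _ _ => isOpen_ball)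
  obtain ⟨t, ht, hyt⟩ := mem_iUnion₂.mp hy
  have := one_le_bumpSum hr hT ht (mem_ball.mp hyt).le
  rw [mem_ofPred_eq, tsum_normalizedBump_image hr, max_eq_right this, div_self (by linarith)]

end Normed

theorem stmt_5_general (Y : Type*) [NormedAddCommGroup Y] [NormedSpace ℝ Y] [FiniteDimensional ℝ Y]
    (D : Set Y) (s : ℝ) (hs : 0 < s) :
    ∃ G : Set (Y → ℝ), G.Countable ∧
      (∀ g ∈ G, ∃ d ∈ D, tsupport g ⊆ ball d s) ∧
      (∀ y : Y, {g ∈ G | (closedBall y (s / 4) ∩ tsupport g).Nonempty}.encard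
          ≤ ((129 : ℕ∞) ^ finrank ℝ Y)) ∧
      (D ⊆ interior {y | ∑' g : G, (g : Y → ℝ) y = 1}) ∧
      (∀ y : Y, ∑' g : G, (g : Y → ℝ) y ≤ 1) ∧
      (∀ g ∈ G, (∀ y, 0 ≤ g y ∧ g y ≤ 1) ∧
        LipschitzWith (Real.toNNReal (40 * (130 : ℝ) ^ finrank ℝ Y / s)) g) := by
  have hr : 0 < s / 4 := by positivity
  obtain ⟨T, hTD, hT, hDT⟩ := exists_subset_pairwise_le_dist_forall_exists_dist_lt hr D
  refine ⟨normalizedBump (s / 4) T '' T, (hT.countable_of_le_dist hr).image _, ?_, fun y => ?_,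
    fun d hd => ?_, fun y => ?_, ?_⟩
  · rintro _ ⟨t, ht, rfl⟩
    exact ⟨t, hTD ht,
      (tsupport_normalizedBump_subset hr t).trans (closedBall_subset_ball (by linarith))⟩
  · calc _ ≤ (7 : ℕ∞) ^ finrank ℝ Y := encard_setOf_inter_tsupport_nonempty_le hr hT y
      _ ≤ 129 ^ finrank ℝ Y := by gcongr; norm_num
  · obtain ⟨t, ht, hdt⟩ := hDT d hd
    exact biUnion_ball_subset_interior_setOf_tsum_eq_one hr hT
      (mem_biUnion ht (mem_ball.mpr hdt))
  · rw [tsum_normalizedBump_image hr]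
    exact div_le_one_of_le₀ (le_max_right _ _) (zero_le_one.trans (le_max_left _ _))
  · rintro _ ⟨t, ht, rfl⟩
    refine ⟨fun y => ⟨normalizedBump_nonneg t y, normalizedBump_le_one t y⟩,
      (lipschitzWith_normalizedBump hr hT t).weaken (Real.toNNReal_le_toNNReal ?_)⟩
    rw [div_div_eq_mul_div]
    refine div_le_div_of_nonneg_right ?_ hs.le
    nlinarith [pow_le_pow_left₀ (by norm_num : (0 : ℝ) ≤ 7) (by norm_num : (7 : ℝ) ≤ 130)
      (finrank ℝ Y), one_le_pow₀ (by norm_num : (1 : ℝ) ≤ 130) (n := finrank ℝ Y)]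

/-- Partition of unity near a closed set `D` in a finite dimensional normed space, at scale
`s`, with controlled overlap and Lipschitz constants. -/
theorem stmt_5 (Y : Type*) [NormedAddCommGroup Y] [NormedSpace ℝ Y] [FiniteDimensional ℝ Y]
    (D : Set Y) (hD : IsClosed D) (s : ℝ) (hs : 0 < s) :
    ∃ G : Set (Y → ℝ), G.Countable ∧
      (∀ g ∈ G, ∃ d ∈ D, tsupport g ⊆ ball d s) ∧
      (∀ y : Y, {g ∈ G | (closedBall y (s / 4) ∩ tsupport g).Nonempty}.encard
          ≤ ((129 : ℕ∞) ^ finrank ℝ Y)) ∧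
      (D ⊆ interior {y | ∑' g : G, (g : Y → ℝ) y = 1}) ∧
      (∀ y : Y, ∑' g : G, (g : Y → ℝ) y ≤ 1) ∧
      (∀ g ∈ G, (∀ y, 0 ≤ g y ∧ g y ≤ 1) ∧
        LipschitzWith (Real.toNNReal (40 * (130 : ℝ) ^ finrank ℝ Y / s)) g) :=
  stmt_5_general Y D s hs
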